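/- arXiv:2601.09914 — 5 statements merged into one kernel-verified Lean document; each statement's English description precedes it below -/
import Mathlib

section
/- Let μ and ν be probability measures on ℝ, each with integrable identity function of mean zero, with ν((-∞,0)) > 0 and ν((0,∞)) > 0. Let F > 0, H < 0 and C be real numbers and define the risky marginal profit π_x(θ,ω) = (B + θ)·F + ω·H − C for a real constant B. Then, under the product measure μ ⊗ ν, the difference of conditional expectations of π_x over the bad extraction state {ω < 0} and the good extraction state {ω > 0} equals H·[(∫_{(-∞,0)} ω dν)/ν((-∞,0)) − (∫_{(0,∞)} ω dν)/ν((0,∞))], and is strictly positive. (Lemma 3.1, risk-decreasing case: for risk-decreasing inputs, expected marginal profit is higher in the bad state when insurance contracts are built on the extraction shock ω.) -/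
open MeasureTheory Set

/-!
By independence, the integral of the marginal profit over `univ ×ˢ S` splits into a `θ`-part,
which contributes `(B F - C) ν(S)` because `θ` has mean zero, and the `ω`-part `H ∫_S ω dν`.
After dividing by `ν(S)` the constant parts cancel, and the remaining bracket is negative because
`ω` is negative on the bad state and positive on the good one.
-/

theorem setIntegral_pos_of_pos_on {X : Type*} [MeasurableSpace X] {μ : Measure X} {s : Set X}
    {f : X → ℝ} (hs : MeasurableSet s) (hf : IntegrableOn f s μ) (hpos : ∀ x ∈ s, 0 < f x)
    (hμs : 0 < μ s) : 0 < ∫ x in s, f x ∂μ := by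
  rw [setIntegral_pos_iff_support_of_nonneg_ae
    ((ae_restrict_iff' hs).2 (.of_forall fun x hx => (hpos x hx).le)) hf]
  rwa [(inter_eq_right (s := Function.support f)).2 fun x hx => (hpos x hx).ne']

theorem setIntegral_univ_prod_add {α β : Type*} [MeasurableSpace α] [MeasurableSpace β]
    {μ : Measure α} {ν : Measure β} [IsProbabilityMeasure μ] [IsFiniteMeasure ν]
    {f : α → ℝ} {g : β → ℝ} {s : Set β} (hf : Integrable f μ) (hg : IntegrableOn g s ν) :
    ∫ p in univ ×ˢ s, f p.1 + g p.2 ∂μ.prod ν = (∫ x, f x ∂μ) * ν.real s + ∫ y in s, g y ∂ν := by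
  rw [← Measure.prod_restrict, Measure.restrict_univ,
    integral_add (hf.comp_fst _) (hg.comp_snd _), integral_fun_fst, integral_fun_snd]
  simp [mul_comm]

theorem setIntegral_univ_prod_marginalProfit {μ ν : Measure ℝ} [IsProbabilityMeasure μ]
    [IsFiniteMeasure ν] (hIntμ : Integrable id μ) (hmeanμ : ∫ θ, θ ∂μ = 0)
    (hIntν : Integrable id ν) (B F H C : ℝ) (S : Set ℝ) :
    ∫ p in univ ×ˢ S, ((B + p.1) * F + p.2 * H - C) ∂(μ.prod ν)
      = (B * F - C) * (ν S).toReal + H * ∫ ω in S, ω ∂ν := by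
  have hθF : Integrable (fun θ : ℝ => θ * F) μ := hIntμ.mul_const F
  have hmean : ∫ θ, θ * F + (B * F - C) ∂μ = B * F - C := by
    rw [integral_add hθF (integrable_const _), integral_mul_const, hmeanμ]
    simp
  calc ∫ p in univ ×ˢ S, ((B + p.1) * F + p.2 * H - C) ∂(μ.prod ν)
      = ∫ p in univ ×ˢ S, (p.1 * F + (B * F - C)) + p.2 * H ∂(μ.prod ν) := by
        congr 1; funext p; ring
    _ = (B * F - C) * ν.real S + ∫ ω in S, ω * H ∂ν := by
        rw [setIntegral_univ_prod_add (f := fun θ => θ * F + (B * F - C)) (g := fun ω => ω * H)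
          (hθF.add (integrable_const _)) (hIntν.integrableOn.mul_const H), hmean]
    _ = (B * F - C) * (ν S).toReal + H * ∫ ω in S, ω ∂ν := by
        rw [integral_mul_const, measureReal_def, mul_comm H]

theorem setIntegral_Ioi_zero_id_pos {ν : Measure ℝ} (hIntν : Integrable id ν)
    (hpos : 0 < ν (Ioi 0)) : 0 < ∫ ω in Ioi (0 : ℝ), ω ∂ν :=
  setIntegral_pos_of_pos_on measurableSet_Ioi hIntν.integrableOn (fun _ hω => hω) hpos

theorem setIntegral_Iio_zero_id_neg {ν : Measure ℝ} (hIntν : Integrable id ν)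
    (hneg : 0 < ν (Iio 0)) : ∫ ω in Iio (0 : ℝ), ω ∂ν < 0 := by
  have h := setIntegral_pos_of_pos_on (f := fun ω => -ω) measurableSet_Iio
    hIntν.neg.integrableOn (fun _ hω => neg_pos.2 hω) hneg
  rwa [integral_neg, neg_pos] at h

theorem stmt_3_general (μ ν : Measure ℝ) [IsProbabilityMeasure μ] [IsProbabilityMeasure ν]
    (hIntμ : Integrable id μ) (hmeanμ : ∫ θ, θ ∂μ = 0)
    (hIntν : Integrable id ν)
    (hneg : 0 < ν (Iio 0)) (hpos : 0 < ν (Ioi 0))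
    (B F H C : ℝ) (hH : H < 0) :
    ((∫ p in (univ : Set ℝ) ×ˢ (Iio (0 : ℝ)), ((B + p.1) * F + p.2 * H - C) ∂(μ.prod ν))
        / (ν (Iio 0)).toReal
      - (∫ p in (univ : Set ℝ) ×ˢ (Ioi (0 : ℝ)), ((B + p.1) * F + p.2 * H - C) ∂(μ.prod ν))
        / (ν (Ioi 0)).toReal
      = H * ((∫ ω in Iio (0 : ℝ), ω ∂ν) / (ν (Iio 0)).toReal
          - (∫ ω in Ioi (0 : ℝ), ω ∂ν) / (ν (Ioi 0)).toReal))
    ∧ 0 < (∫ p in (univ : Set ℝ) ×ˢ (Iio (0 : ℝ)), ((B + p.1) * F + p.2 * H - C) ∂(μ.prod ν))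
        / (ν (Iio 0)).toReal
      - (∫ p in (univ : Set ℝ) ×ˢ (Ioi (0 : ℝ)), ((B + p.1) * F + p.2 * H - C) ∂(μ.prod ν))
        / (ν (Ioi 0)).toReal := by
  have mneg : 0 < (ν (Iio 0)).toReal := ENNReal.toReal_pos hneg.ne' (measure_ne_top ν _)
  have mpos : 0 < (ν (Ioi 0)).toReal := ENNReal.toReal_pos hpos.ne' (measure_ne_top ν _)
  have hdiff : (∫ p in (univ : Set ℝ) ×ˢ (Iio (0 : ℝ)), ((B + p.1) * F + p.2 * H - C) ∂(μ.prod ν))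
        / (ν (Iio 0)).toReal
      - (∫ p in (univ : Set ℝ) ×ˢ (Ioi (0 : ℝ)), ((B + p.1) * F + p.2 * H - C) ∂(μ.prod ν))
        / (ν (Ioi 0)).toReal
      = H * ((∫ ω in Iio (0 : ℝ), ω ∂ν) / (ν (Iio 0)).toReal
          - (∫ ω in Ioi (0 : ℝ), ω ∂ν) / (ν (Ioi 0)).toReal) := by
    rw [setIntegral_univ_prod_marginalProfit hIntμ hmeanμ hIntν,
      setIntegral_univ_prod_marginalProfit hIntμ hmeanμ hIntν]
    field_simp
    ring
  have hbad : (∫ ω in Iio (0 : ℝ), ω ∂ν) / (ν (Iio 0)).toReal < 0 :=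
    div_neg_of_neg_of_pos (setIntegral_Iio_zero_id_neg hIntν hneg) mneg
  have hgood : 0 < (∫ ω in Ioi (0 : ℝ), ω ∂ν) / (ν (Ioi 0)).toReal :=
    div_pos (setIntegral_Ioi_zero_id_pos hIntν hpos) mpos
  exact ⟨hdiff, hdiff ▸ mul_pos_of_neg_of_neg hH (by linarith)⟩

/-- Lemma 3.1, risk-decreasing case: with independent mean-zero shocks
(product measure μ ⊗ ν) and risky marginal profit
π_x(θ,ω) = (B + θ)·F + ω·H − C with F > 0 and H < 0 (risk-decreasing input),
the difference of conditional expectations of π_x over the bad extraction state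
{ω < 0} and the good extraction state {ω > 0} equals
H·[E[ω | ω<0] − E[ω | ω>0]] and is strictly positive. -/
theorem stmt_3 (μ ν : Measure ℝ) [IsProbabilityMeasure μ] [IsProbabilityMeasure ν]
    (hIntμ : Integrable id μ) (hmeanμ : ∫ θ, θ ∂μ = 0)
    (hIntν : Integrable id ν) (hmeanν : ∫ ω, ω ∂ν = 0)
    (hneg : 0 < ν (Iio 0)) (hpos : 0 < ν (Ioi 0))
    (B F H C : ℝ) (hF : 0 < F) (hH : H < 0) :
    ((∫ p in (univ : Set ℝ) ×ˢ (Iio (0 : ℝ)), ((B + p.1) * F + p.2 * H - C) ∂(μ.prod ν))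
        / (ν (Iio 0)).toReal
      - (∫ p in (univ : Set ℝ) ×ˢ (Ioi (0 : ℝ)), ((B + p.1) * F + p.2 * H - C) ∂(μ.prod ν))
        / (ν (Ioi 0)).toReal
      = H * ((∫ ω in Iio (0 : ℝ), ω ∂ν) / (ν (Iio 0)).toReal
          - (∫ ω in Ioi (0 : ℝ), ω ∂ν) / (ν (Ioi 0)).toReal))
    ∧ 0 < (∫ p in (univ : Set ℝ) ×ˢ (Iio (0 : ℝ)), ((B + p.1) * F + p.2 * H - C) ∂(μ.prod ν))
        / (ν (Iio 0)).toReal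
      - (∫ p in (univ : Set ℝ) ×ˢ (Ioi (0 : ℝ)), ((B + p.1) * F + p.2 * H - C) ∂(μ.prod ν))
        / (ν (Ioi 0)).toReal :=
  stmt_3_general μ ν hIntμ hmeanμ hIntν hneg hpos B F H C hH
end

section
/- Let μ be a probability measure on ℝ with integrable identity of mean zero, and suppose the trigger 0 is a median: μ((-∞,0)) = 1/2 = μ((0,∞)). Let F > 0 and C be real numbers and set π_x(θ) = (B + θ)·F − C for a real constant B. Let v < 0 (the common value of the concave utility's second derivative when insurance fully covers the loss between states, so utility levels coincide across states). Then the cross-partial of expected utility in input and payout, N = v·[ (1/2)·∫_{(-∞,0)} π_x dμ − (1/2)·∫_{(0,∞)} π_x dμ ], is strictly positive; consequently, for any D < 0 (the second-order condition ∂²U/∂x² < 0), the implicit-function-theorem comparative static ∂x*/∂γ = −N/D is strictly positive. (Proposition 2.1: with standard fishery production and an index insurance contract triggered at θ̄ = 0, optimal input and harvest always increase with the payout γ.) -/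
/-!
Write π_x(θ) = F·θ + (B·F − C). Because both trigger states have probability 1/2, the
constant part contributes equally to the two set integrals and cancels in N, leaving
N = (v·F/2)·(∫_{θ<0} θ − ∫_{θ>0} θ). The mean-zero condition turns this into
N = v·F·∫_{θ<0} θ, and the last integral is strictly negative because the bad state has
positive probability. Hence N > 0, and −N/D > 0 for every D < 0.
-/

open MeasureTheory Set

variable {μ : Measure ℝ}

theorem setIntegral_Iio_add_setIntegral_Ioi {f : ℝ → ℝ} {a : ℝ} (hf : Integrable f μ)
    (ha : f a = 0) : ∫ θ in Iio a, f θ ∂μ + ∫ θ in Ioi a, f θ ∂μ = ∫ θ, f θ ∂μ := by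
  have hIci : ∫ θ in Ici a, f θ ∂μ = ∫ θ in Ioi a, f θ ∂μ :=
    setIntegral_eq_of_subset_of_forall_sdiff_eq_zero measurableSet_Ici Ioi_subset_Ici_self
      fun x hx => by rwa [show x = a from le_antisymm (not_lt.mp hx.2) hx.1]
  rw [← hIci, ← compl_Iio]
  exact integral_add_compl measurableSet_Iio hf

theorem setIntegral_Iio_zero_id_neg_s6 (hf : IntegrableOn id (Iio 0) μ) (hμ : 0 < μ (Iio 0)) :
    ∫ θ in Iio (0 : ℝ), θ ∂μ < 0 := by
  have hneg_pos : 0 < ∫ θ in Iio (0 : ℝ), -θ ∂μ := by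
    rw [setIntegral_pos_iff_support_of_nonneg_ae (f := fun θ => -θ) _ hf.neg]
    · exact hμ.trans_le (measure_mono fun x hx => ⟨neg_ne_zero.mpr (ne_of_lt hx), hx⟩)
    · filter_upwards [ae_restrict_mem measurableSet_Iio] with x hx
      exact neg_nonneg.mpr (le_of_lt hx)
  rw [integral_neg] at hneg_pos
  exact neg_pos.mp hneg_pos

theorem setIntegral_affine [IsFiniteMeasure μ] {s : Set ℝ} (hf : IntegrableOn id s μ)
    (B F C : ℝ) :
    ∫ θ in s, ((B + θ) * F - C) ∂μ = F * ∫ θ in s, θ ∂μ + μ.real s * (B * F - C) := by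
  have hθF : IntegrableOn (fun θ : ℝ => θ * F) s μ := hf.mul_const F
  simp_rw [show ∀ θ : ℝ, (B + θ) * F - C = θ * F + (B * F - C) from fun θ => by ring]
  rw [integral_add hθF (integrableOn_const (measure_ne_top μ s)), integral_mul_const,
    setIntegral_const, smul_eq_mul, mul_comm F]

/-- Proposition 2.1: with standard fishery production (marginal profit
π_x(θ) = (B + θ)·F − C, F > 0), a mean-zero shock with median-0 trigger
(μ(−∞,0) = 1/2 = μ(0,∞)), and concave utility (common second derivative
v < 0 when insurance fully covers the loss), the cross-partial
N = v·[(1/2)·∫_{θ<0} π_x dμ − (1/2)·∫_{θ>0} π_x dμ] is strictly positive;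
hence for any D < 0 (second-order condition), ∂x*/∂γ = −N/D > 0: optimal
input and harvest always increase with the payout γ. -/
theorem stmt_6 (μ : Measure ℝ) [IsProbabilityMeasure μ]
    (hInt : Integrable id μ) (hmean : ∫ θ, θ ∂μ = 0)
    (hmed1 : μ (Iio 0) = 1/2) (hmed2 : μ (Ioi 0) = 1/2)
    (B F C v : ℝ) (hF : 0 < F) (hv : v < 0)
    (N : ℝ)
    (hN : N = v * ((1/2) * ∫ θ in Iio (0 : ℝ), ((B + θ) * F - C) ∂μ
            - (1/2) * ∫ θ in Ioi (0 : ℝ), ((B + θ) * F - C) ∂μ)) :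
    0 < N ∧ ∀ D : ℝ, D < 0 → 0 < -N / D := by
  have hsplit : ∫ θ in Iio (0 : ℝ), θ ∂μ + ∫ θ in Ioi (0 : ℝ), θ ∂μ = 0 :=
    (setIntegral_Iio_add_setIntegral_Ioi (f := id) hInt rfl).trans hmean
  have hbad : ∫ θ in Iio (0 : ℝ), θ ∂μ < 0 :=
    setIntegral_Iio_zero_id_neg_s6 hInt.integrableOn (by rw [hmed1]; norm_num)
  have hstates : μ.real (Iio 0) = μ.real (Ioi 0) := by
    rw [measureReal_def, measureReal_def, hmed1, hmed2]
  have hNval : N = v * F * ∫ θ in Iio (0 : ℝ), θ ∂μ := by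
    rw [hN, setIntegral_affine hInt.integrableOn, setIntegral_affine hInt.integrableOn, hstates]
    linear_combination (-(v * F) / 2) * hsplit
  have hNpos : 0 < N := hNval ▸ mul_pos_of_neg_of_neg (mul_neg_of_neg_of_pos hv hF) hbad
  exact ⟨hNpos, fun D hD => div_pos_of_neg_of_neg (neg_neg_of_pos hNpos) hD⟩
end

section
/- Let μ and ν be probability measures on ℝ, each with integrable identity of mean zero, μ((-∞,0)) = 1/2 = μ((0,∞)), and μ gives positive mass to (-∞,0) and (0,∞). Let F > 0, C and H be arbitrary real numbers and set π_x(θ,ω) = (B + θ)·F + ω·H − C for a real constant B. Let v < 0. Then, under the product measure μ ⊗ ν, the cross-partial N = v·[ (1/2)·∫_{(-∞,0)×ℝ} π_x d(μ⊗ν) − (1/2)·∫_{(0,∞)×ℝ} π_x d(μ⊗ν) ] is strictly positive, regardless of the sign of H; consequently, for any D < 0, ∂x*/∂γ = −N/D is strictly positive. (Proposition 3.2: an index insurance contract triggered on the stock shock at θ̄ = 0 always increases optimal input use and harvest.) -/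
/-!
Integrating out the extraction shock removes the `ω·H` term, since `ω` has mean zero and is
independent of `θ`. The median condition `μ(−∞,0) = μ(0,∞)` makes the constant part of marginal
profit cancel between the two states, and the zero mean of `θ` turns `∫_{θ<0} θ` into
`−∫_{θ>0} θ`. Hence `N = −v·F·∫_{θ>0} θ dμ`, which is positive because `μ(0,∞) > 0`.
-/

open MeasureTheory Set

theorem setIntegral_prod_univ_add_comp_snd {α β : Type*} [MeasurableSpace α] [MeasurableSpace β]
    {μ : Measure α} {ν : Measure β} [IsFiniteMeasure μ] [IsProbabilityMeasure ν] {s : Set α}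
    {f : α → ℝ} {g : β → ℝ} (hf : IntegrableOn f s μ) (hg : Integrable g ν) :
    ∫ p in s ×ˢ univ, f p.1 + g p.2 ∂(μ.prod ν) = ∫ x in s, f x ∂μ + μ.real s * ∫ y, g y ∂ν := by
  have hrestrict : (μ.prod ν).restrict (s ×ˢ univ) = (μ.restrict s).prod ν := by
    rw [← Measure.prod_restrict, Measure.restrict_univ]
  rw [hrestrict, integral_add (hf.comp_fst ν) (hg.comp_snd (μ.restrict s)), integral_fun_fst,
    integral_fun_snd]
  simp

theorem setIntegral_Iio_add_setIntegral_Ioi_id {μ : Measure ℝ}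
    (hμ : Integrable (fun x : ℝ => x) μ) :
    ∫ x in Iio 0, x ∂μ + ∫ x in Ioi 0, x ∂μ = ∫ x, x ∂μ := by
  have hdisj : Disjoint (Iio (0 : ℝ)) (Ioi 0) :=
    (Iic_disjoint_Ioi le_rfl).mono_left Iio_subset_Iic_self
  rw [← setIntegral_union hdisj measurableSet_Ioi hμ.integrableOn hμ.integrableOn]
  refine setIntegral_eq_integral_of_forall_compl_eq_zero fun x hx => ?_
  simpa [lt_or_lt_iff_ne] using hx

theorem setIntegral_Ioi_id_pos {μ : Measure ℝ} (hμ : Integrable (fun x : ℝ => x) μ)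
    (hpos : 0 < μ (Ioi 0)) :
    0 < ∫ x in Ioi 0, x ∂μ := by
  have hnonneg : 0 ≤ᵐ[μ.restrict (Ioi 0)] fun x => x :=
    (ae_restrict_mem measurableSet_Ioi).mono fun x hx => le_of_lt hx
  rw [setIntegral_pos_iff_support_of_nonneg_ae hnonneg hμ.integrableOn]
  convert hpos using 2
  ext x
  simp +contextual [ne_of_gt]

theorem setIntegral_marginalProfit (μ ν : Measure ℝ) [IsFiniteMeasure μ]
    [IsProbabilityMeasure ν] (hIntμ : Integrable (fun θ : ℝ => θ) μ)
    (hIntν : Integrable (fun ω : ℝ => ω) ν) (hmeanν : ∫ ω, ω ∂ν = 0) (B F H C : ℝ) (s : Set ℝ) :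
    ∫ p in s ×ˢ univ, ((B + p.1) * F + p.2 * H - C) ∂(μ.prod ν)
      = F * ∫ θ in s, θ ∂μ + (B * F - C) * μ.real s := by
  have hg : Integrable (fun ω : ℝ => ω * H) ν := hIntν.mul_const H
  have hf : IntegrableOn (fun θ : ℝ => F * θ + (B * F - C)) s μ :=
    (hIntμ.integrableOn.const_mul F).add (integrable_const _)
  have hsplit : (fun p : ℝ × ℝ => (B + p.1) * F + p.2 * H - C)
      = fun p => (F * p.1 + (B * F - C)) + p.2 * H := by
    funext p; ring
  rw [hsplit, setIntegral_prod_univ_add_comp_snd hf hg, integral_mul_const,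
    hmeanν, integral_add (hIntμ.integrableOn.const_mul F) (integrable_const _),
    integral_const_mul, setIntegral_const, smul_eq_mul]
  ring

theorem stmt_9_general (μ ν : Measure ℝ) [IsProbabilityMeasure μ] [IsProbabilityMeasure ν]
    (hIntμ : Integrable id μ) (hmeanμ : ∫ θ, θ ∂μ = 0)
    (hIntν : Integrable id ν) (hmeanν : ∫ ω, ω ∂ν = 0)
    (hmed1 : μ (Iio 0) = 1/2) (hmed2 : μ (Ioi 0) = 1/2)
    (hpos : 0 < μ (Ioi 0))
    (B F H C v : ℝ) (hF : 0 < F) (hv : v < 0)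
    (N : ℝ)
    (hN : N = v * ((1/2) * ∫ p in (Iio (0 : ℝ)) ×ˢ (univ : Set ℝ),
              ((B + p.1) * F + p.2 * H - C) ∂(μ.prod ν)
            - (1/2) * ∫ p in (Ioi (0 : ℝ)) ×ˢ (univ : Set ℝ),
              ((B + p.1) * F + p.2 * H - C) ∂(μ.prod ν))) :
    0 < N ∧ ∀ D : ℝ, D < 0 → 0 < -N / D := by
  have hmass : μ.real (Iio 0) = μ.real (Ioi 0) := by
    rw [measureReal_def, measureReal_def, hmed1, hmed2]
  have hsym : ∫ θ in Iio 0, θ ∂μ = -∫ θ in Ioi 0, θ ∂μ := by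
    linarith [setIntegral_Iio_add_setIntegral_Ioi_id hIntμ]
  have hNeq : N = -v * F * ∫ θ in Ioi 0, θ ∂μ := by
    rw [hN, setIntegral_marginalProfit μ ν hIntμ hIntν hmeanν,
      setIntegral_marginalProfit μ ν hIntμ hIntν hmeanν, hmass, hsym]
    ring
  have hNpos : 0 < N := by
    rw [hNeq]
    exact mul_pos (mul_pos (neg_pos.2 hv) hF) (setIntegral_Ioi_id_pos hIntμ hpos)
  exact ⟨hNpos, fun D hD => div_pos_of_neg_of_neg (neg_neg_of_pos hNpos) hD⟩

/-- Proposition 3.2: with independent mean-zero shocks (product measure μ ⊗ ν),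
marginal profit π_x(θ,ω) = (B + θ)·F + ω·H − C with F > 0 and H arbitrary,
median-0 trigger on θ (μ(−∞,0) = 1/2 = μ(0,∞), both with positive mass), and
concave utility (common second derivative v < 0), the cross-partial
N = v·[(1/2)·∫_{(−∞,0)×ℝ} π_x − (1/2)·∫_{(0,∞)×ℝ} π_x] is strictly positive
regardless of the sign of H; hence for any D < 0, ∂x*/∂γ = −N/D > 0: a
contract triggered on the stock shock always increases optimal input use and
harvest. -/
theorem stmt_9 (μ ν : Measure ℝ) [IsProbabilityMeasure μ] [IsProbabilityMeasure ν]
    (hIntμ : Integrable id μ) (hmeanμ : ∫ θ, θ ∂μ = 0)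
    (hIntν : Integrable id ν) (hmeanν : ∫ ω, ω ∂ν = 0)
    (hmed1 : μ (Iio 0) = 1/2) (hmed2 : μ (Ioi 0) = 1/2)
    (hneg : 0 < μ (Iio 0)) (hpos : 0 < μ (Ioi 0))
    (B F H C v : ℝ) (hF : 0 < F) (hv : v < 0)
    (N : ℝ)
    (hN : N = v * ((1/2) * ∫ p in (Iio (0 : ℝ)) ×ˢ (univ : Set ℝ),
              ((B + p.1) * F + p.2 * H - C) ∂(μ.prod ν)
            - (1/2) * ∫ p in (Ioi (0 : ℝ)) ×ˢ (univ : Set ℝ),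
              ((B + p.1) * F + p.2 * H - C) ∂(μ.prod ν))) :
    0 < N ∧ ∀ D : ℝ, D < 0 → 0 < -N / D :=
  stmt_9_general μ ν hIntμ hmeanμ hIntν hmeanν hmed1 hmed2 hpos B F H C v hF hv N hN
end

section
/- Let Uaa, Ubb, Uab, Na, Nb be real numbers with Uaa < 0, Ubb < 0, and Det := Uaa·Ubb − Uab·Uab > 0. Suppose Na > 0 and Nb > 0 (both inputs risk increasing) and Uab > 0. Then dxa := −(Ubb·Na − Uab·Nb)/Det > 0 and dxb := −(−Uab·Na + Uaa·Nb)/Det > 0. Symmetrically, if Na < 0 and Nb < 0 (both inputs risk decreasing) and Uab > 0, then dxa < 0 and dxb < 0. (Proposition 4.1, same-risk-effects case: with two inputs sharing the same risk effects and positive utility cross-partial ∂²U/∂xa∂xb > 0, index insurance on the extraction shock changes each input in the direction of its own risk effect.) -/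
/-- Proposition 4.1, same-risk-effects case: with Hessian entries Uaa < 0,
Ubb < 0, positive determinant Det = Uaa·Ubb − Uab², and positive cross-partial
Uab > 0, if both payout cross-partials Na, Nb are positive (both inputs risk
increasing) then both comparative statics
dxa = −(Ubb·Na − Uab·Nb)/Det and dxb = −(−Uab·Na + Uaa·Nb)/Det are positive;
symmetrically, if Na, Nb are both negative (both inputs risk decreasing) then
both comparative statics are negative. -/
theorem stmt_10 (Uaa Ubb Uab Na Nb : ℝ) (hUaa : Uaa < 0) (hUbb : Ubb < 0)
    (hDet : 0 < Uaa * Ubb - Uab * Uab) :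
    (0 < Na → 0 < Nb → 0 < Uab →
      0 < -(Ubb * Na - Uab * Nb) / (Uaa * Ubb - Uab * Uab) ∧
      0 < -(-Uab * Na + Uaa * Nb) / (Uaa * Ubb - Uab * Uab)) ∧
    (Na < 0 → Nb < 0 → 0 < Uab →
      -(Ubb * Na - Uab * Nb) / (Uaa * Ubb - Uab * Uab) < 0 ∧
      -(-Uab * Na + Uaa * Nb) / (Uaa * Ubb - Uab * Uab) < 0) := by
  constructor
  · intro ha hb hab
    constructor
    · apply div_pos _ hDet; nlinarith
    · apply div_pos _ hDet; nlinarith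
  · intro ha hb hab
    constructor
    · apply div_neg_of_neg_of_pos _ hDet; nlinarith
    · apply div_neg_of_neg_of_pos _ hDet; nlinarith
end

section
/- Let Uaa, Ubb, Uab, Na, Nb be real numbers with Uaa < 0, Ubb < 0, and Det := Uaa·Ubb − Uab·Uab > 0. Suppose Na > 0 and Nb < 0 (input a risk increasing, input b risk decreasing) and Uab < 0. Then dxa := −(Ubb·Na − Uab·Nb)/Det > 0 and dxb := −(−Uab·Na + Uaa·Nb)/Det < 0. (Proposition 4.1, opposite-risk-effects case: with two inputs of opposite risk effects and negative utility cross-partial ∂²U/∂xa∂xb < 0, index insurance on the extraction shock raises the risk-increasing input and lowers the risk-decreasing input.) -/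
/-- Proposition 4.1, opposite-risk-effects case: with Hessian entries Uaa < 0,
Ubb < 0, positive determinant Det = Uaa·Ubb − Uab², negative cross-partial
Uab < 0, Na > 0 (input a risk increasing) and Nb < 0 (input b risk
decreasing), index insurance raises input a and lowers input b:
dxa = −(Ubb·Na − Uab·Nb)/Det > 0 and dxb = −(−Uab·Na + Uaa·Nb)/Det < 0. -/
theorem stmt_11 (Uaa Ubb Uab Na Nb : ℝ) (hUaa : Uaa < 0) (hUbb : Ubb < 0)
    (hDet : 0 < Uaa * Ubb - Uab * Uab)
    (hNa : 0 < Na) (hNb : Nb < 0) (hUab : Uab < 0) :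
    0 < -(Ubb * Na - Uab * Nb) / (Uaa * Ubb - Uab * Uab) ∧
    -(-Uab * Na + Uaa * Nb) / (Uaa * Ubb - Uab * Uab) < 0 := by
  constructor
  · apply div_pos _ hDet
    nlinarith [mul_pos (neg_pos.mpr hUbb) hNa, mul_pos (neg_pos.mpr hUab) (neg_pos.mpr hNb)]
  · apply div_neg_of_neg_of_pos _ hDet
    nlinarith [mul_pos (neg_pos.mpr hUab) hNa, mul_pos (neg_pos.mpr hUaa) (neg_pos.mpr hNb)]
end
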